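/- arXiv:0709.1978 — 7 statements merged into one kernel-verified Lean document; each statement's English description precedes it below -/
import Mathlib

section
/- For every nonnegative integer n, the alternating sum ∑_{k=0}^{n} (-1)^{n+k} * C(n+k+1, 2k+1) * 4^k equals n + 1. -/
/-!
Write `S_n(y) = ∑ₖ C(n+k+1, 2k+1) yᵏ` and `T_n(y) = ∑ₖ C(n+k, 2k) yᵏ`. Pascal's rule gives
`S_{n+1} = T_{n+1} + S_n` and `T_{n+1} = T_n + y S_n`, so `S_n(y)` is the Chebyshev polynomial
`U_n(1 + y/2)`. At `y = -4` these recurrences are solved by `S_n = (-1)ⁿ (n+1)` and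
`T_n = (-1)ⁿ (2n+1)`, and the alternating sum is `(-1)ⁿ S_n(-4)`.
-/

open Finset

section Diagonals

variable {R : Type*} [CommRing R]

def oddDiagonalSum (y : R) (n : ℕ) : R :=
  ∑ k ∈ range (n + 1), ((n + k + 1).choose (2 * k + 1) : R) * y ^ k

def evenDiagonalSum (y : R) (n : ℕ) : R :=
  ∑ k ∈ range (n + 1), ((n + k).choose (2 * k) : R) * y ^ k

theorem oddDiagonalSum_succ (y : R) (n : ℕ) :
    oddDiagonalSum y (n + 1) = evenDiagonalSum y (n + 1) + oddDiagonalSum y n := by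
  have pascal (k : ℕ) : ((n + 1 + k + 1).choose (2 * k + 1) : R) =
      (n + 1 + k).choose (2 * k) + (n + k + 1).choose (2 * k + 1) := by
    rw [Nat.choose_succ_succ', Nat.cast_add, Nat.add_right_comm n 1 k]
  have top : ((n + (n + 1) + 1).choose (2 * (n + 1) + 1) : R) = 0 := by
    rw [Nat.choose_eq_zero_of_lt (by omega), Nat.cast_zero]
  simp only [oddDiagonalSum, evenDiagonalSum, pascal, add_mul, sum_add_distrib]
  rw [sum_range_succ (fun k ↦ ((n + k + 1).choose (2 * k + 1) : R) * y ^ k) (n + 1), top,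
    zero_mul, add_zero]

theorem evenDiagonalSum_succ (y : R) (n : ℕ) :
    evenDiagonalSum y (n + 1) = evenDiagonalSum y n + y * oddDiagonalSum y n := by
  have pascal (k : ℕ) : ((n + 1 + (k + 1)).choose (2 * (k + 1)) : R) =
      (n + (k + 1)).choose (2 * (k + 1)) + (n + k + 1).choose (2 * k + 1) := by
    rw [show n + 1 + (k + 1) = n + k + 1 + 1 by ring, show 2 * (k + 1) = 2 * k + 1 + 1 by ring,
      Nat.choose_succ_succ' (n + k + 1), Nat.cast_add, add_comm, ← add_assoc]
  have top : ((n + (n + 1)).choose (2 * (n + 1)) : R) = 0 := by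
    rw [Nat.choose_eq_zero_of_lt (by omega), Nat.cast_zero]
  have evenDiagonalSum_eq : evenDiagonalSum y n =
      ∑ k ∈ range (n + 2), ((n + k).choose (2 * k) : R) * y ^ k := by
    rw [evenDiagonalSum, sum_range_succ _ (n + 1), top, zero_mul, add_zero]
  rw [evenDiagonalSum_eq, evenDiagonalSum, oddDiagonalSum,
    sum_range_succ' (fun k ↦ ((n + 1 + k).choose (2 * k) : R) * y ^ k),
    sum_range_succ' (fun k ↦ ((n + k).choose (2 * k) : R) * y ^ k), mul_sum]
  simp only [pascal, add_mul, sum_add_distrib, mul_zero, add_zero, Nat.choose_zero_right,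
    mul_left_comm y, ← pow_succ']
  ring

theorem diagonalSums_neg_four (n : ℕ) :
    oddDiagonalSum (-4 : R) n = (-1) ^ n * (n + 1) ∧
      evenDiagonalSum (-4 : R) n = (-1) ^ n * (2 * n + 1) := by
  induction n with
  | zero => simp [oddDiagonalSum, evenDiagonalSum]
  | succ n ih =>
    obtain ⟨hodd, heven⟩ := ih
    have heven' : evenDiagonalSum (-4 : R) (n + 1) = (-1) ^ (n + 1) * (2 * (n + 1 : ℕ) + 1) := by
      rw [evenDiagonalSum_succ, hodd, heven]
      push_cast
      ring
    refine ⟨?_, heven'⟩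
    rw [oddDiagonalSum_succ, heven', hodd]
    push_cast
    ring

end Diagonals

theorem thm1 (n : ℕ) :
    ∑ k ∈ Finset.range (n + 1),
      (-1 : ℤ) ^ (n + k) * ((n + k + 1).choose (2 * k + 1)) * 4 ^ k = n + 1 := by
  have hsum : ∑ k ∈ Finset.range (n + 1),
      (-1 : ℤ) ^ (n + k) * ((n + k + 1).choose (2 * k + 1)) * 4 ^ k =
        (-1) ^ n * oddDiagonalSum (-4) n := by
    rw [oddDiagonalSum, mul_sum]
    refine sum_congr rfl fun k _ ↦ ?_
    rw [neg_pow (4 : ℤ), pow_add]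
    ring
  rw [hsum, (diagonalSums_neg_four n).1, ← mul_assoc, ← pow_add, ← two_mul, pow_mul, neg_one_sq,
    one_pow, one_mul]
end

section
/- For every integer n ≥ -1, the alternating sum ∑_{k=0}^{n+1} (-1)^{n+k+1} * C(n+k+1, 2k) * 4^k equals 2n + 3. -/
/-!
Write `a m = ∑ₖ C(m+k, 2k) xᵏ` and `b m = ∑ₖ C(m+k, 2k+1) xᵏ`. Pascal's rule gives the coupled
recursion `b (m+1) = a m + b m`, `a (m+1) = a m + x b (m+1)`, and at `x = -4` it is solved by
`a m = (-1)ᵐ (2m+1)`, `b m = (-1)ᵐ⁺¹ m`. The sum in the theorem is `(-1)ᵐ a m` at `x = -4`, `m = n + 1`.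
-/

open Finset

section ChooseSums

variable {R : Type*} [CommRing R]

def evenChooseSum (x : R) (m : ℕ) : R :=
  ∑ k ∈ range (m + 1), ((m + k).choose (2 * k) : R) * x ^ k

def oddChooseSum (x : R) (m : ℕ) : R :=
  ∑ k ∈ range (m + 1), ((m + k).choose (2 * k + 1) : R) * x ^ k

theorem evenChooseSum_eq_sum_range_add_two (x : R) (m : ℕ) :
    evenChooseSum x m = ∑ k ∈ range (m + 2), ((m + k).choose (2 * k) : R) * x ^ k := by
  rw [sum_range_succ, Nat.choose_eq_zero_of_lt (by omega : m + (m + 1) < 2 * (m + 1)),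
    Nat.cast_zero, zero_mul, add_zero, evenChooseSum]

theorem oddChooseSum_succ (x : R) (m : ℕ) :
    oddChooseSum x (m + 1) = evenChooseSum x m + oddChooseSum x m := by
  rw [oddChooseSum, sum_range_succ,
    Nat.choose_eq_zero_of_lt (by omega : m + 1 + (m + 1) < 2 * (m + 1) + 1),
    Nat.cast_zero, zero_mul, add_zero, evenChooseSum, oddChooseSum, ← sum_add_distrib]
  refine sum_congr rfl fun k _ => ?_
  rw [show m + 1 + k = m + k + 1 by omega, Nat.choose_succ_succ', Nat.cast_add, add_mul]

theorem evenChooseSum_succ (x : R) (m : ℕ) :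
    evenChooseSum x (m + 1) = evenChooseSum x m + x * oddChooseSum x (m + 1) := by
  have hSucc : evenChooseSum x (m + 1) = ∑ j ∈ range (m + 1),
      ((m + 1 + (j + 1)).choose (2 * (j + 1)) : R) * x ^ (j + 1) + 1 := by
    rw [evenChooseSum, sum_range_succ']
    simp
  have hEven : evenChooseSum x m = ∑ j ∈ range (m + 1),
      ((m + (j + 1)).choose (2 * (j + 1)) : R) * x ^ (j + 1) + 1 := by
    rw [evenChooseSum_eq_sum_range_add_two, sum_range_succ']
    simp
  have hOdd : oddChooseSum x (m + 1) =
      ∑ j ∈ range (m + 1), ((m + 1 + j).choose (2 * j + 1) : R) * x ^ j := by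
    rw [oddChooseSum, sum_range_succ,
      Nat.choose_eq_zero_of_lt (by omega : m + 1 + (m + 1) < 2 * (m + 1) + 1),
      Nat.cast_zero, zero_mul, add_zero]
  rw [hSucc, hEven, hOdd, mul_sum, add_right_comm, ← sum_add_distrib]
  congr 1
  refine sum_congr rfl fun j _ => ?_
  rw [show m + 1 + (j + 1) = m + 1 + j + 1 by omega, show 2 * (j + 1) = 2 * j + 1 + 1 by omega,
    Nat.choose_succ_succ', show m + 1 + j = m + (j + 1) by omega]
  push_cast
  ring

theorem chooseSums_neg_four (m : ℕ) :
    evenChooseSum (-4 : R) m = (-1) ^ m * (2 * m + 1) ∧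
      oddChooseSum (-4 : R) m = (-1) ^ (m + 1) * m := by
  induction m with
  | zero => simp [evenChooseSum, oddChooseSum]
  | succ m ih =>
    obtain ⟨hEven, hOdd⟩ := ih
    have hOdd' : oddChooseSum (-4 : R) (m + 1) = (-1) ^ (m + 2) * (m + 1 : ℕ) := by
      rw [oddChooseSum_succ, hEven, hOdd]
      push_cast
      ring
    refine ⟨?_, hOdd'⟩
    rw [evenChooseSum_succ, hEven, hOdd']
    push_cast
    ring

end ChooseSums

theorem thm2 (n : ℤ) (hn : -1 ≤ n) :
    ∑ k ∈ Finset.range (n + 2).toNat,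
      (-1 : ℚ) ^ (n + k + 1) * ((n + k + 1).toNat.choose (2 * k)) * 4 ^ k
      = 2 * n + 3 := by
  obtain ⟨m, rfl⟩ : ∃ m : ℕ, n = m - 1 := ⟨(n + 1).toNat, by omega⟩
  have hsum : ∑ k ∈ range ((m : ℤ) - 1 + 2).toNat,
      (-1 : ℚ) ^ ((m : ℤ) - 1 + k + 1) * (((m : ℤ) - 1 + k + 1).toNat.choose (2 * k)) * 4 ^ k
      = (-1) ^ m * evenChooseSum (-4 : ℚ) m := by
    rw [evenChooseSum, mul_sum, show ((m : ℤ) - 1 + 2).toNat = m + 1 by omega]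
    refine sum_congr rfl fun k _ => ?_
    rw [show ((m : ℤ) - 1 + k + 1) = ((m + k : ℕ) : ℤ) by push_cast; ring, zpow_natCast,
      Int.toNat_natCast, pow_add, show (-4 : ℚ) = -1 * 4 by norm_num, mul_pow]
    ring
  rw [hsum, (chooseSums_neg_four m).1, ← mul_assoc, ← mul_pow]
  push_cast
  ring
end

section
/- For every positive integer n, the double sum ∑_{k=0}^{n} ∑_{m=2k+1}^{n+k+1} (-1)^{m+k+n+1} * C(n+k+1, m) * 2^{m-1} equals (n+1)^2. -/
/-!
With `N = n + k + 1`, the inner sum is half the tail `m > 2k` of the binomial expansion of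
`(2 - 1) ^ N`. Pascal's rule in `N` shows that passing from `n` to `n + 1` adds
`(-1) ^ (n + 1 + k) * C(n + 1 + k, 2k) * 4 ^ k` to the `k`-th inner sum. These increments add up
to `S_{2n+2}(2) = 2n + 3`, where `S` is the rescaled Chebyshev polynomial of the second kind, whose
even members are `S_{2m} = ∑ k, (-1) ^ (m + k) * C(m + k, 2k) * X ^ (2k)`. So the double sum
starts at `1` and grows by consecutive odd numbers.
-/

open Finset

theorem sum_Icc_add_one_eq_sum_Icc {M : Type*} [AddCommMonoid M] (f : ℕ → M) (a b : ℕ) :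
    ∑ m ∈ Icc (a + 1) (b + 1), f m = ∑ m ∈ Icc a b, f (m + 1) := by
  rw [← map_add_right_Icc, sum_map]
  rfl

section BinomTail

variable {R : Type*} [CommRing R]

/-- `x * binomTail x N a` is the part `m > a` of `(x - 1) ^ N = ∑ C(N, m) x ^ m (-1) ^ (N - m)`;
the sign is written `(-1) ^ (m + N)` to avoid truncated subtraction. -/
def binomTail (x : R) (N a : ℕ) : R :=
  ∑ m ∈ Icc (a + 1) N, (-1) ^ (m + N) * (N.choose m : R) * x ^ (m - 1)

theorem binomTail_succ (x : R) (N a : ℕ) :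
    binomTail x (N + 1) a
      = (x - 1) * binomTail x N a + (-1) ^ (a + N) * (N.choose a : R) * x ^ a := by
  rcases lt_or_ge N a with h | h
  · simp [binomTail, Nat.choose_eq_zero_of_lt h, Icc_eq_empty_of_lt, h, Nat.lt_succ_of_lt h]
  have hhead : ∑ m ∈ Icc a N, (-1) ^ (m + N) * (N.choose m : R) * x ^ m
      = x * binomTail x N a + (-1) ^ (a + N) * (N.choose a : R) * x ^ a := by
    rw [Icc_eq_cons_Ioc h, sum_cons, ← Icc_add_one_left_eq_Ioc, binomTail, mul_sum, add_comm]
    congr 1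
    refine sum_congr rfl fun m hm => ?_
    rw [← Nat.sub_add_cancel (show 1 ≤ m by grind), pow_succ, Nat.add_sub_cancel]
    ring
  have hshift : ∑ m ∈ Icc a N, (-1) ^ (m + 1 + N) * (N.choose (m + 1) : R) * x ^ m
      = binomTail x N a := by
    have h := sum_Icc_add_one_eq_sum_Icc
      (fun m => (-1) ^ (m + N) * (N.choose m : R) * x ^ (m - 1)) a N
    rw [sum_Icc_succ_top (by omega)] at h
    simpa [binomTail] using h.symm
  calc binomTail x (N + 1) a
      = ∑ m ∈ Icc a N, (-1) ^ (m + 1 + (N + 1)) * ((N + 1).choose (m + 1) : R) * x ^ m := by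
        rw [binomTail, sum_Icc_add_one_eq_sum_Icc]
        rfl
    _ = ∑ m ∈ Icc a N, (-1) ^ (m + N) * (N.choose m : R) * x ^ m
          - ∑ m ∈ Icc a N, (-1) ^ (m + 1 + N) * (N.choose (m + 1) : R) * x ^ m := by
        rw [← sum_sub_distrib]
        refine sum_congr rfl fun m _ => ?_
        rw [Nat.choose_succ_succ']
        push_cast
        ring
    _ = _ := by rw [hhead, hshift]; ring

end BinomTail

namespace Polynomial.Chebyshev

variable {R : Type*} [CommRing R]

theorem sum_choose_two_mul_succ (x : R) (m : ℕ) :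
    ∑ k ∈ range (m + 2), (-1) ^ (m + 1 + k) * ((m + 1 + k).choose (2 * k) : R) * x ^ (2 * k)
      = x * ∑ k ∈ range (m + 1),
          (-1) ^ (m + k) * ((m + k + 1).choose (2 * k + 1) : R) * x ^ (2 * k + 1)
        - ∑ k ∈ range (m + 1), (-1) ^ (m + k) * ((m + k).choose (2 * k) : R) * x ^ (2 * k) := by
  set E : ℕ → R := fun k => (-1) ^ (m + k) * ((m + k).choose (2 * k) : R) * x ^ (2 * k)
  have hstep : ∀ k, (-1) ^ (m + 1 + (k + 1)) * ((m + 1 + (k + 1)).choose (2 * (k + 1)) : R)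
        * x ^ (2 * (k + 1))
      = x * ((-1) ^ (m + k) * ((m + k + 1).choose (2 * k + 1) : R) * x ^ (2 * k + 1))
        - E (k + 1) := by
    intro k
    simp only [E, show 2 * (k + 1) = 2 * k + 1 + 1 by ring,
      show m + 1 + (k + 1) = m + k + 1 + 1 by ring, show m + (k + 1) = m + k + 1 by ring,
      Nat.choose_succ_succ']
    push_cast
    ring
  have htop : E (m + 1) = 0 := by
    simp only [E, Nat.choose_eq_zero_of_lt (show m + (m + 1) < 2 * (m + 1) by omega),
      Nat.cast_zero, mul_zero, zero_mul]
  have hbot : E 0 = (-1) ^ m := by simp [E]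
  rw [sum_range_succ', sum_congr rfl fun k _ => hstep k, sum_sub_distrib, ← mul_sum]
  simp only [add_zero, mul_zero, Nat.choose_zero_right, Nat.cast_one, pow_zero, mul_one]
  linear_combination
    -(sum_range_succ' E (m + 1)).symm.trans (sum_range_succ E (m + 1)) - htop + hbot

theorem sum_choose_two_mul_add_one_succ (x : R) (m : ℕ) :
    ∑ k ∈ range (m + 2),
        (-1) ^ (m + 1 + k) * ((m + 1 + k + 1).choose (2 * k + 1) : R) * x ^ (2 * k + 1)
      = x * ∑ k ∈ range (m + 2),
          (-1) ^ (m + 1 + k) * ((m + 1 + k).choose (2 * k) : R) * x ^ (2 * k)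
        - ∑ k ∈ range (m + 1),
          (-1) ^ (m + k) * ((m + k + 1).choose (2 * k + 1) : R) * x ^ (2 * k + 1) := by
  set O : ℕ → R :=
    fun k => (-1) ^ (m + k) * ((m + k + 1).choose (2 * k + 1) : R) * x ^ (2 * k + 1)
  have hstep : ∀ k,
      (-1) ^ (m + 1 + k) * ((m + 1 + k + 1).choose (2 * k + 1) : R) * x ^ (2 * k + 1)
        = x * ((-1) ^ (m + 1 + k) * ((m + 1 + k).choose (2 * k) : R) * x ^ (2 * k)) - O k := by
    intro k
    simp only [O, Nat.choose_succ_succ', show m + 1 + k = m + k + 1 by ring]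
    push_cast
    ring
  have htop : O (m + 1) = 0 := by
    simp only [O, Nat.choose_eq_zero_of_lt (show m + (m + 1) + 1 < 2 * (m + 1) + 1 by omega),
      Nat.cast_zero, mul_zero, zero_mul]
  rw [sum_congr rfl fun k _ => hstep k, sum_sub_distrib, ← mul_sum, sum_range_succ O, htop,
    add_zero]

theorem S_two_mul_and_S_two_mul_add_one_eq_sum (m : ℕ) :
    S R (2 * m)
        = ∑ k ∈ range (m + 1), (-1) ^ (m + k) * ((m + k).choose (2 * k) : R[X]) * X ^ (2 * k) ∧
      S R (2 * m + 1)
        = ∑ k ∈ range (m + 1),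
          (-1) ^ (m + k) * ((m + k + 1).choose (2 * k + 1) : R[X]) * X ^ (2 * k + 1) := by
  induction m with
  | zero => simp
  | succ m ih =>
    have heven : S R (2 * (m + 1 : ℕ)) = X * S R (2 * m + 1) - S R (2 * m) := by
      have h := S_add_two R (2 * m)
      rwa [show (2 * m + 2 : ℤ) = 2 * (m + 1 : ℕ) by push_cast; ring] at h
    have hodd : S R (2 * (m + 1 : ℕ) + 1) = X * S R (2 * (m + 1 : ℕ)) - S R (2 * m + 1) := by
      have h := S_add_two R (2 * m + 1)
      rwa [show (2 * m + 1 + 2 : ℤ) = 2 * (m + 1 : ℕ) + 1 by push_cast; ring,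
        show (2 * m + 1 + 1 : ℤ) = 2 * (m + 1 : ℕ) by push_cast; ring] at h
    rw [ih.1, ih.2, ← sum_choose_two_mul_succ] at heven
    refine ⟨heven, ?_⟩
    rw [hodd, heven, ih.2, ← sum_choose_two_mul_add_one_succ]

end Polynomial.Chebyshev

section DoubleSum

open Polynomial Polynomial.Chebyshev

variable {R : Type*} [CommRing R]

theorem sum_binomTail_succ (x : R) (n : ℕ) :
    ∑ k ∈ range (n + 2), binomTail x (n + 1 + k + 1) (2 * k)
      = (x - 1) * ∑ k ∈ range (n + 1), binomTail x (n + k + 1) (2 * k)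
        + (S R (2 * (n + 1 : ℕ))).eval x := by
  have hdiag : binomTail x (n + (n + 1) + 1) (2 * (n + 1)) = 0 := by
    rw [binomTail, Icc_eq_empty_of_lt (by omega), sum_empty]
  have hsign : ∀ k, (-1 : R) ^ (2 * k + (n + k + 1)) = (-1) ^ (n + 1 + k) := fun k => by
    rw [pow_add, pow_mul, neg_one_sq, one_pow, one_mul, show n + k + 1 = n + 1 + k by ring]
  calc ∑ k ∈ range (n + 2), binomTail x (n + 1 + k + 1) (2 * k)
      = ∑ k ∈ range (n + 2), ((x - 1) * binomTail x (n + k + 1) (2 * k)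
          + (-1) ^ (n + 1 + k) * ((n + 1 + k).choose (2 * k) : R) * x ^ (2 * k)) := by
        refine sum_congr rfl fun k _ => ?_
        rw [show n + 1 + k + 1 = n + k + 1 + 1 by ring, binomTail_succ, hsign,
          show n + k + 1 = n + 1 + k by ring]
    _ = _ := by
        rw [sum_add_distrib, ← mul_sum, sum_range_succ _ (n + 1), hdiag, add_zero,
          (S_two_mul_and_S_two_mul_add_one_eq_sum (n + 1)).1]
        simp [eval_finsetSum]

theorem sum_binomTail_two (n : ℕ) :
    ∑ k ∈ range (n + 1), binomTail (2 : R) (n + k + 1) (2 * k) = (n + 1) ^ 2 := by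
  induction n with
  | zero => simp [binomTail]
  | succ n ih =>
    rw [sum_binomTail_succ, ih, S_eval_two]
    push_cast
    ring

end DoubleSum

theorem cor1_general (n : ℕ) :
    ∑ k ∈ Finset.range (n + 1), ∑ m ∈ Finset.Icc (2 * k + 1) (n + k + 1),
      (-1 : ℤ) ^ (m + k + n + 1) * ((n + k + 1).choose m) * 2 ^ (m - 1)
      = (n + 1) ^ 2 := by
  have hinner : ∀ k, ∑ m ∈ Icc (2 * k + 1) (n + k + 1),
      (-1 : ℤ) ^ (m + k + n + 1) * ((n + k + 1).choose m) * 2 ^ (m - 1)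
        = binomTail 2 (n + k + 1) (2 * k) := fun k =>
    sum_congr rfl fun m _ => by rw [show m + k + n + 1 = m + (n + k + 1) by ring]
  simp only [hinner]
  exact_mod_cast sum_binomTail_two n

theorem cor1 (n : ℕ) (hn : 1 ≤ n) :
    ∑ k ∈ Finset.range (n + 1), ∑ m ∈ Finset.Icc (2 * k + 1) (n + k + 1),
      (-1 : ℤ) ^ (m + k + n + 1) * ((n + k + 1).choose m) * 2 ^ (m - 1)
      = (n + 1) ^ 2 :=
  cor1_general n
end

section
/- For every nonnegative integer n, the double sum ∑_{k=0}^{2n} ∑_{m=2k+2}^{2n+2k+2} (-1)^{m+k} * C(2n+k+2, m) * 2^{m-1} equals (2n+1)(2n+2). -/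
/-!
Put `H M r = ∑ₖ (-4)ᵏ C(M + k, 2k + r)` (`chebSum`). Substituting `m = 2k + 2 + i` and
exchanging the sums turns twice the double sum (with `2n` replaced by any `N`) into
`T N = ∑ᵢ (-2)^(i+2) H (N+2) (i+2)` (`chebTail`). Pascal's rule gives
`H (M+1) (r+1) = H M (r+1) + H M r` and `H (M+1) 0 = H M 0 - 4 H (M+1) 1`, whence
`H M 0 = (-1)^M (2M+1)` and `H M 1 = -(-1)^M M`; then `T (N+1) = -T N + 4 H (N+2) 1`,
so `T N = 2 (-1)^N (N+1)(N+2)`.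
-/

open Finset

def chebSum (M r : ℕ) : ℤ :=
  ∑ k ∈ range (M + 1), (-4) ^ k * ((M + k).choose (2 * k + r))

theorem chebSum_eq_sum_range {M r K : ℕ} (hK : M < K + r) :
    chebSum M r = ∑ k ∈ range K, (-4 : ℤ) ^ k * ((M + k).choose (2 * k + r)) := by
  have hvanish : ∀ u, M < u + r → ∀ k ≥ u, (-4 : ℤ) ^ k * ((M + k).choose (2 * k + r)) = 0 :=
    fun u hu k hk => by rw [Nat.choose_eq_zero_of_lt (by omega)]; simp
  rw [chebSum, ← eventually_constant_sum (hvanish (M + 1) (by omega)) (Nat.le_add_left _ K),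
    eventually_constant_sum (hvanish K hK) (by omega)]

theorem chebSum_eq_zero_of_lt {M r : ℕ} (h : M < r) : chebSum M r = 0 := by
  simpa using chebSum_eq_sum_range (K := 0) (by omega : M < 0 + r)

theorem chebSum_succ_succ (M r : ℕ) :
    chebSum (M + 1) (r + 1) = chebSum M (r + 1) + chebSum M r := by
  rw [chebSum_eq_sum_range (K := M + 2) (by omega), chebSum_eq_sum_range (K := M + 2) (by omega),
    chebSum_eq_sum_range (K := M + 2) (by omega), ← sum_add_distrib]
  refine sum_congr rfl fun k _ => ?_
  rw [show M + 1 + k = M + k + 1 by ring, show 2 * k + (r + 1) = 2 * k + r + 1 by ring,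
    Nat.choose_succ_succ']
  push_cast
  ring

theorem chebSum_succ_zero (M : ℕ) :
    chebSum (M + 1) 0 = chebSum M 0 - 4 * chebSum (M + 1) 1 := by
  rw [chebSum_eq_sum_range (K := M + 2) (by omega), chebSum_eq_sum_range (K := M + 2) (by omega),
    chebSum_eq_sum_range (K := M + 1) (by omega), sum_range_succ' _ (M + 1),
    sum_range_succ' _ (M + 1), mul_sum, eq_sub_iff_add_eq, add_right_comm, ← sum_add_distrib]
  congr 1
  · refine sum_congr rfl fun k _ => ?_
    rw [show M + 1 + (k + 1) = M + k + 1 + 1 by ring, show M + (k + 1) = M + k + 1 by ring,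
      show M + 1 + k = M + k + 1 by ring, show 2 * (k + 1) + 0 = 2 * k + 1 + 1 by ring,
      Nat.choose_succ_succ' (M + k + 1)]
    push_cast
    ring
  · simp

theorem chebSum_zero_and_one (M : ℕ) :
    chebSum M 0 = (-1) ^ M * (2 * M + 1) ∧ chebSum M 1 = -(-1) ^ M * M := by
  induction M with
  | zero => simp [chebSum]
  | succ M ih =>
    obtain ⟨h0, h1⟩ := ih
    have h1' : chebSum (M + 1) 1 = -(-1) ^ (M + 1) * (M + 1 : ℕ) := by
      rw [chebSum_succ_succ, h0, h1, pow_succ]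
      push_cast
      ring
    refine ⟨?_, h1'⟩
    rw [chebSum_succ_zero, h0, h1', pow_succ]
    push_cast
    ring

def chebTail (N : ℕ) : ℤ :=
  ∑ i ∈ range (N + 1), (-2) ^ (i + 2) * chebSum (N + 2) (i + 2)

theorem chebTail_succ (N : ℕ) : chebTail (N + 1) = -chebTail N + 4 * chebSum (N + 2) 1 := by
  have hpascal : chebTail (N + 1) = ∑ i ∈ range (N + 2), (-2) ^ (i + 2) * chebSum (N + 2) (i + 2)
      + ∑ i ∈ range (N + 2), (-2) ^ (i + 2) * chebSum (N + 2) (i + 1) := by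
    rw [chebTail, ← sum_add_distrib]
    exact sum_congr rfl fun i _ => by rw [chebSum_succ_succ (N + 2) (i + 1)]; ring
  have hsame : ∑ i ∈ range (N + 2), (-2) ^ (i + 2) * chebSum (N + 2) (i + 2) = chebTail N := by
    rw [sum_range_succ, chebSum_eq_zero_of_lt (by omega), mul_zero, add_zero, chebTail]
  have hshift : ∑ i ∈ range (N + 2), (-2) ^ (i + 2) * chebSum (N + 2) (i + 1)
      = -2 * chebTail N + 4 * chebSum (N + 2) 1 := by
    rw [sum_range_succ', chebTail, mul_sum]
    congr 1
    exact sum_congr rfl fun i _ => by ring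
  rw [hpascal, hsame, hshift]
  ring

theorem chebTail_eq (N : ℕ) : chebTail N = 2 * (-1) ^ N * (N + 1) * (N + 2) := by
  induction N with
  | zero => simp [chebTail, chebSum, sum_range_succ, Nat.choose_eq_zero_of_lt]
  | succ N ih =>
    rw [chebTail_succ, ih, (chebSum_zero_and_one (N + 2)).2]
    push_cast
    ring

theorem two_mul_alternating_double_sum_eq_chebTail (N : ℕ) :
    2 * ∑ k ∈ range (N + 1), ∑ m ∈ Icc (2 * k + 2) (N + 2 * k + 2),
      (-1 : ℤ) ^ (m + k) * ((N + k + 2).choose m) * 2 ^ (m - 1) = chebTail N := by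
  have hterm : ∀ k i, 2 * ((-1 : ℤ) ^ (2 * k + 2 + i + k) * ((N + k + 2).choose (2 * k + 2 + i))
      * 2 ^ (2 * k + 2 + i - 1))
      = (-2) ^ (i + 2) * ((-4) ^ k * ((N + 2 + k).choose (2 * k + (i + 2)))) := by
    intro k i
    rw [show 2 * k + 2 + i + k = (i + k) + 2 * (k + 1) by ring, pow_add (-1 : ℤ) (i + k),
      pow_mul (-1 : ℤ) 2, neg_one_sq, one_pow, show 2 * k + 2 + i - 1 = 2 * k + 1 + i by omega,
      show N + 2 + k = N + k + 2 by ring, show 2 * k + (i + 2) = 2 * k + 2 + i by ring,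
      show (-2 : ℤ) = -1 * 2 by norm_num, show (-4 : ℤ) = -1 * 2 ^ 2 by norm_num, mul_pow,
      mul_pow, ← pow_mul (2 : ℤ) 2 k]
    ring
  have hinner : ∀ k, ∑ m ∈ Icc (2 * k + 2) (N + 2 * k + 2),
      (-1 : ℤ) ^ (m + k) * ((N + k + 2).choose m) * 2 ^ (m - 1)
      = ∑ i ∈ range (N + 1), (-1 : ℤ) ^ (2 * k + 2 + i + k) * ((N + k + 2).choose (2 * k + 2 + i))
          * 2 ^ (2 * k + 2 + i - 1) := by
    intro k
    rw [← Ico_add_one_right_eq_Icc, sum_Ico_eq_sum_range,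
      show N + 2 * k + 2 + 1 - (2 * k + 2) = N + 1 by omega]
  simp only [hinner, mul_sum, hterm]
  rw [sum_comm, chebTail]
  refine sum_congr rfl fun i _ => ?_
  rw [chebSum_eq_sum_range (K := N + 1) (by omega), mul_sum]

theorem alternating_double_sum_eq (N : ℕ) :
    ∑ k ∈ range (N + 1), ∑ m ∈ Icc (2 * k + 2) (N + 2 * k + 2),
      (-1 : ℤ) ^ (m + k) * ((N + k + 2).choose m) * 2 ^ (m - 1)
      = (-1) ^ N * (N + 1) * (N + 2) := by
  have h := two_mul_alternating_double_sum_eq_chebTail N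
  rw [chebTail_eq] at h
  linarith

theorem cor2 (n : ℕ) :
    ∑ k ∈ Finset.range (2 * n + 1), ∑ m ∈ Finset.Icc (2 * k + 2) (2 * n + 2 * k + 2),
      (-1 : ℤ) ^ (m + k) * ((2 * n + k + 2).choose m) * 2 ^ (m - 1)
      = (2 * n + 1) * (2 * n + 2) := by
  rw [alternating_double_sum_eq, (even_two_mul n).neg_one_pow]
  push_cast
  ring
end

section
/- For every nonnegative integer n, the double sum ∑_{k=0}^{2n+1} ∑_{m=2k+1}^{2n+k+2} (-1)^{m+k} * C(2n+k+2, m) * 2^{m-1} equals (2n+2)^2. -/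
/-!
Reflecting `m ↦ a + k - m` turns twice the `k`-th inner sum into `(-1) ^ a` times the partial
binomial sum `B(a + k, a - 1 - k)`, where `B(N, r) = ∑_{j ≤ r} C(N, j) (-1) ^ j 2 ^ (N - j)` is a
truncation of `(-1 + 2) ^ N`. These entries fill the antidiagonal `N + r = 2a - 1` of the array
`B` except for the `a` entries with `r ≥ N`, which are complete expansions and equal `1`.
Pascal's rule gives `B(N + 1, r + 1) = -B(N, r) + 2 B(N, r + 1)`, so the antidiagonal sums `D(s)`
satisfy `D(s + 2) = -D(s) + 2 D(s + 1) + 1`; hence `D(s) = (s + 1)(s + 2) / 2`, and the double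
sum is `(-1) ^ a (D(2a - 1) - a) / 2 = (-1) ^ a a ^ 2`.
-/

open Finset

section PartialBinomial

variable {R : Type*} [CommRing R] (x y : R)

def binomialPartialSum (N r : ℕ) : R :=
  ∑ j ∈ range (r + 1), N.choose j * x ^ j * y ^ (N - j)

@[simp]
lemma binomialPartialSum_zero_left (r : ℕ) : binomialPartialSum x y 0 r = 1 := by
  simp [binomialPartialSum, sum_range_succ']

@[simp]
lemma binomialPartialSum_zero_right (N : ℕ) : binomialPartialSum x y N 0 = y ^ N := by
  simp [binomialPartialSum]

lemma binomialPartialSum_of_le {N r : ℕ} (h : N ≤ r) :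
    binomialPartialSum x y N r = (x + y) ^ N := by
  have hzero : ∀ j ∈ range (r + 1), j ∉ range (N + 1) →
      (N.choose j * x ^ j * y ^ (N - j) : R) = 0 :=
    fun j _ hj => by rw [Nat.choose_eq_zero_of_lt (by simpa using hj)]; simp
  rw [binomialPartialSum, add_pow, ← sum_subset (range_subset_range.2 (by omega)) hzero]
  exact sum_congr rfl fun j _ => by ring

lemma choose_mul_pow_succ_sub (N j : ℕ) :
    (N.choose j : R) * y ^ (N + 1 - j) = N.choose j * y ^ (N - j) * y := by
  rcases le_or_gt j N with h | h
  · rw [Nat.sub_add_comm h, pow_succ, mul_assoc]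
  · simp [Nat.choose_eq_zero_of_lt h]

lemma binomialPartialSum_succ_succ (N r : ℕ) :
    binomialPartialSum x y (N + 1) (r + 1)
      = x * binomialPartialSum x y N r + y * binomialPartialSum x y N (r + 1) := by
  have hshift : ∑ j ∈ range (r + 1), ((N.choose (j + 1) : R) * x ^ (j + 1) * y ^ (N - j))
      + y ^ (N + 1) = y * binomialPartialSum x y N (r + 1) := by
    rw [binomialPartialSum, mul_sum, sum_range_succ' _ (r + 1)]
    refine congrArg₂ (· + ·) (sum_congr rfl fun j _ => ?_) (by simp [pow_succ'])
    rw [show N - j = N + 1 - (j + 1) by omega, mul_right_comm, choose_mul_pow_succ_sub]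
    ring
  rw [binomialPartialSum, sum_range_succ', ← hshift, binomialPartialSum, mul_sum, ← add_assoc,
    ← sum_add_distrib]
  congr 1
  · refine sum_congr rfl fun j _ => ?_
    rw [Nat.choose_succ_succ', Nat.succ_sub_succ]
    push_cast
    ring
  · simp

def binomialPartialSumDiag (s : ℕ) : R :=
  ∑ p ∈ antidiagonal s, binomialPartialSum x y p.1 p.2

lemma binomialPartialSumDiag_add_two (s : ℕ) :
    binomialPartialSumDiag x y (s + 2)
      = x * binomialPartialSumDiag x y s + y * binomialPartialSumDiag x y (s + 1) + 1 := by
  simp only [binomialPartialSumDiag]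
  rw [Nat.sum_antidiagonal_succ', Nat.sum_antidiagonal_succ, Nat.sum_antidiagonal_succ' (n := s)]
  simp only [binomialPartialSum_succ_succ, sum_add_distrib, ← mul_sum,
    binomialPartialSum_zero_left, binomialPartialSum_zero_right]
  ring

lemma binomialPartialSumDiag_two_mul_add_one (hxy : x + y = 1) (b : ℕ) :
    binomialPartialSumDiag x y (2 * b + 1)
      = (b + 1) + ∑ k ∈ range (b + 1), binomialPartialSum x y (b + 1 + k) (b - k) := by
  rw [binomialPartialSumDiag, Nat.sum_antidiagonal_eq_sum_range_succ (binomialPartialSum x y),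
    Nat.succ_eq_add_one, show 2 * b + 1 + 1 = (b + 1) + (b + 1) by omega, sum_range_add]
  congr 1
  · rw [sum_congr rfl fun k hk => binomialPartialSum_of_le x y (by rw [mem_range] at hk; omega)]
    simp [hxy]
  · exact sum_congr rfl fun k _ => by rw [show 2 * b + 1 - (b + 1 + k) = b - k by omega]

end PartialBinomial

lemma two_mul_binomialPartialSumDiag_neg_one_two (s : ℕ) :
    2 * binomialPartialSumDiag (-1 : ℤ) 2 s = (s + 1) * (s + 2) := by
  induction s using Nat.twoStepInduction with
  | zero => simp [binomialPartialSumDiag]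
  | one => simp [binomialPartialSumDiag, Nat.sum_antidiagonal_succ]
  | more s h₀ h₁ =>
    rw [binomialPartialSumDiag_add_two]
    push_cast at h₁ ⊢
    linear_combination -h₀ + 2 * h₁

lemma two_mul_sum_Icc_eq_binomialPartialSum {a k : ℕ} (hk : k < a) :
    2 * ∑ m ∈ Icc (2 * k + 1) (a + k), (-1 : ℤ) ^ (m + k) * ((a + k).choose m) * 2 ^ (m - 1)
      = (-1) ^ a * binomialPartialSum (-1) 2 (a + k) (a - 1 - k) := by
  have hreflect := sum_Ico_reflect
    (fun m => 2 * ((-1 : ℤ) ^ (m + k) * ((a + k).choose m) * 2 ^ (m - 1))) 0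
    (show a - 1 - k + 1 ≤ a + k + 1 by omega)
  rw [show a + k + 1 - (a - 1 - k + 1) = 2 * k + 1 by omega, Nat.sub_zero,
    Ico_add_one_right_eq_Icc (2 * k + 1)] at hreflect
  rw [mul_sum, ← hreflect, binomialPartialSum, mul_sum, Nat.Ico_zero_eq_range]
  refine sum_congr rfl fun j hj => ?_
  rw [mem_range] at hj
  obtain ⟨t, ht⟩ : ∃ t, a + k - j = t + 1 := ⟨a + k - j - 1, by omega⟩
  have hsign : (-1 : ℤ) ^ (a + k - j + k) = (-1) ^ a * (-1) ^ j := by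
    rw [← pow_add, neg_one_pow_eq_pow_mod_two, neg_one_pow_eq_pow_mod_two (n := a + j)]
    congr 1
    omega
  rw [hsign, Nat.choose_symm (by omega), ht, Nat.add_sub_cancel]
  ring

lemma sum_binomialPartialSum_neg_one_two (a : ℕ) :
    ∑ k ∈ range a, binomialPartialSum (-1 : ℤ) 2 (a + k) (a - 1 - k) = 2 * a ^ 2 := by
  rcases a with _ | b
  · simp
  have hdiag := binomialPartialSumDiag_two_mul_add_one (-1 : ℤ) 2 (by norm_num) b
  have htwo := two_mul_binomialPartialSumDiag_neg_one_two (2 * b + 1)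
  rw [hdiag] at htwo
  simp only [Nat.add_sub_cancel]
  push_cast at htwo ⊢
  linarith

theorem sum_range_sum_Icc_neg_one_pow_choose_two_pow (a : ℕ) :
    ∑ k ∈ range a, ∑ m ∈ Icc (2 * k + 1) (a + k),
      (-1 : ℤ) ^ (m + k) * ((a + k).choose m) * 2 ^ (m - 1) = (-1) ^ a * a ^ 2 := by
  refine mul_left_cancel₀ (two_ne_zero (α := ℤ)) ?_
  rw [mul_sum, sum_congr rfl fun k hk => two_mul_sum_Icc_eq_binomialPartialSum (mem_range.1 hk),
    ← mul_sum, sum_binomialPartialSum_neg_one_two]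
  ring

theorem cor3 (n : ℕ) :
    ∑ k ∈ Finset.range (2 * n + 2), ∑ m ∈ Finset.Icc (2 * k + 1) (2 * n + k + 2),
      (-1 : ℤ) ^ (m + k) * ((2 * n + k + 2).choose m) * 2 ^ (m - 1)
      = (2 * n + 2) ^ 2 := by
  simp_rw [show ∀ k, 2 * n + k + 2 = 2 * n + 2 + k from fun k => by omega]
  rw [sum_range_sum_Icc_neg_one_pow_choose_two_pow, Even.neg_one_pow ⟨n + 1, by ring⟩]
  push_cast
  ring
end

section
/- For every positive integer n, the double sum ∑_{k=0}^{2n} ∑_{m=2k+1}^{2n+k+1} (-1)^{m+k+1} * C(2n+k+1, m) * 2^{m-1} equals (2n+1)^2. -/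
/-!
With `Q j M = ∑_{m ≤ j} (-2)^m C(M, m)` the partial sums of `(1 - 2)^M`, twice the inner sum is
`(-1)^N + (-1)^k Q (2k) (N+k+1)`. Pascal's rule gives `Q j (M+1) = -Q j M - (-2)^(j+1) C(M, j)`,
so `G N = ∑_{k ≤ N} (-1)^k Q (2k) (N+k+1)` satisfies `G (N+1) = -G N + (-1)^N + 2 b (N+1)` with
`b N = ∑_k (-4)^k C(N+k, 2k) = (-1)^N (2N+1)`. Hence `G N = (-1)^N (N+1)(2N+1)` and the double sum
equals `(-1)^N (N+1)^2` for every `N` (with `2n` replaced by `N`).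
-/

open Finset

section DiagonalChooseSums

variable {R : Type*} [CommSemiring R]

-- The Morgan–Voyce polynomials `b_N(x)` and `B_{N-1}(x)`.
def evenDiagonalChooseSum (x : R) (N : ℕ) : R :=
  ∑ k ∈ range (N + 1), x ^ k * (N + k).choose (2 * k)

def oddDiagonalChooseSum (x : R) (N : ℕ) : R :=
  ∑ k ∈ range (N + 1), x ^ k * (N + k).choose (2 * k + 1)

theorem oddDiagonalChooseSum_succ (x : R) (N : ℕ) :
    oddDiagonalChooseSum x (N + 1) = evenDiagonalChooseSum x N + oddDiagonalChooseSum x N := by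
  rw [oddDiagonalChooseSum, sum_range_succ,
    Nat.choose_eq_zero_of_lt (by omega : N + 1 + (N + 1) < 2 * (N + 1) + 1), Nat.cast_zero,
    mul_zero, add_zero, evenDiagonalChooseSum, oddDiagonalChooseSum, ← sum_add_distrib]
  refine sum_congr rfl fun k _ => ?_
  rw [show N + 1 + k = N + k + 1 by omega, Nat.choose_succ_succ', Nat.cast_add, mul_add]

theorem evenDiagonalChooseSum_succ (x : R) (N : ℕ) :
    evenDiagonalChooseSum x (N + 1) =
      evenDiagonalChooseSum x N + x * oddDiagonalChooseSum x (N + 1) := by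
  have hodd : oddDiagonalChooseSum x (N + 1) =
      ∑ k ∈ range (N + 1), x ^ k * (N + 1 + k).choose (2 * k + 1) := by
    rw [oddDiagonalChooseSum, sum_range_succ,
      Nat.choose_eq_zero_of_lt (by omega : N + 1 + (N + 1) < 2 * (N + 1) + 1), Nat.cast_zero,
      mul_zero, add_zero]
  have heven : evenDiagonalChooseSum x N =
      ∑ k ∈ range (N + 2), x ^ k * (N + k).choose (2 * k) := by
    rw [sum_range_succ, Nat.choose_eq_zero_of_lt (by omega : N + (N + 1) < 2 * (N + 1)),
      Nat.cast_zero, mul_zero, add_zero, evenDiagonalChooseSum]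
  have hpascal : ∀ k ∈ range (N + 1),
      x ^ (k + 1) * ((N + 1 + (k + 1)).choose (2 * (k + 1)) : R) =
      x ^ (k + 1) * (N + (k + 1)).choose (2 * (k + 1)) +
        x * (x ^ k * (N + 1 + k).choose (2 * k + 1)) := fun k _ => by
    rw [show N + 1 + (k + 1) = N + 1 + k + 1 by omega, show 2 * (k + 1) = 2 * k + 1 + 1 by omega,
      Nat.choose_succ_succ', show N + 1 + k = N + (k + 1) by omega]
    push_cast
    ring
  rw [hodd, heven, evenDiagonalChooseSum, sum_range_succ', sum_range_succ' _ (N + 1),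
    sum_congr rfl hpascal, sum_add_distrib, mul_sum]
  simp only [pow_zero, mul_zero, add_zero, Nat.choose_zero_right]
  ring

end DiagonalChooseSums

theorem diagonalChooseSums_neg_four (N : ℕ) :
    evenDiagonalChooseSum (-4 : ℤ) N = (-1) ^ N * (2 * N + 1) ∧
      oddDiagonalChooseSum (-4 : ℤ) N = (-1) ^ (N + 1) * N := by
  induction N with
  | zero => simp [evenDiagonalChooseSum, oddDiagonalChooseSum]
  | succ N ih =>
    have hodd : oddDiagonalChooseSum (-4 : ℤ) (N + 1) = (-1) ^ (N + 2) * (N + 1 : ℕ) := by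
      rw [oddDiagonalChooseSum_succ, ih.1, ih.2]
      push_cast
      ring
    refine ⟨?_, hodd⟩
    rw [evenDiagonalChooseSum_succ, ih.1, hodd]
    push_cast
    ring

section PartialBinomialSums

variable {R : Type*} [CommRing R]

def partialBinomialSum (x : R) (j M : ℕ) : R :=
  ∑ m ∈ range (j + 1), x ^ m * M.choose m

theorem partialBinomialSum_self (x : R) (M : ℕ) : partialBinomialSum x M M = (1 + x) ^ M := by
  simp [partialBinomialSum, add_comm 1 x, add_pow]

theorem partialBinomialSum_succ_right (x : R) (j M : ℕ) :
    partialBinomialSum x j (M + 1) =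
      (1 + x) * partialBinomialSum x j M - x ^ (j + 1) * M.choose j := by
  induction j with
  | zero => simp [partialBinomialSum]
  | succ j ih =>
    simp only [partialBinomialSum, sum_range_succ _ (j + 1)] at ih ⊢
    rw [ih, Nat.choose_succ_succ']
    push_cast
    ring

theorem sum_Icc_pow_mul_choose (x : R) {j M : ℕ} (h : j ≤ M) :
    ∑ m ∈ Icc (j + 1) M, x ^ m * M.choose m = (1 + x) ^ M - partialBinomialSum x j M := by
  rw [eq_sub_iff_add_eq, add_comm, partialBinomialSum, ← Ico_add_one_right_eq_Icc,
    sum_range_add_sum_Ico _ (by omega), ← partialBinomialSum, partialBinomialSum_self]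

end PartialBinomialSums

theorem two_mul_sum_Icc_neg_one_pow_choose_mul_two_pow {N k : ℕ} (hk : k ≤ N + 1) :
    2 * ∑ m ∈ Icc (2 * k + 1) (N + k + 1),
        (-1 : ℤ) ^ (m + k + 1) * (N + k + 1).choose m * 2 ^ (m - 1) =
      (-1) ^ N + (-1) ^ k * partialBinomialSum (-2) (2 * k) (N + k + 1) := by
  have hterm : ∀ m ∈ Icc (2 * k + 1) (N + k + 1),
      2 * ((-1 : ℤ) ^ (m + k + 1) * (N + k + 1).choose m * 2 ^ (m - 1)) =
        (-1) ^ (k + 1) * ((-2) ^ m * (N + k + 1).choose m) := fun m hm => by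
    obtain ⟨m, rfl⟩ : ∃ m', m = m' + 1 := ⟨m - 1, by grind⟩
    rw [Nat.add_sub_cancel, neg_pow (2 : ℤ)]
    ring
  have hsign : ((-1 : ℤ) ^ k) ^ 2 = 1 := by rw [← pow_mul, pow_mul']; simp
  rw [mul_sum, sum_congr rfl hterm, ← mul_sum, sum_Icc_pow_mul_choose _ (by omega),
    show (1 + -2 : ℤ) = -1 by norm_num]
  linear_combination (-1) ^ N * hsign

theorem sum_neg_one_pow_mul_partialBinomialSum (N : ℕ) :
    ∑ k ∈ range (N + 1), (-1 : ℤ) ^ k * partialBinomialSum (-2) (2 * k) (N + k + 1) =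
      (-1) ^ N * (N + 1) * (2 * N + 1) := by
  induction N with
  | zero => simp [partialBinomialSum]
  | succ N ih =>
    have hstep : ∀ k ∈ range (N + 2),
        (-1 : ℤ) ^ k * partialBinomialSum (-2) (2 * k) (N + 1 + k + 1) =
          -((-1) ^ k * partialBinomialSum (-2) (2 * k) (N + k + 1)) +
            2 * ((-4) ^ k * (N + 1 + k).choose (2 * k)) := fun k _ => by
      rw [show N + 1 + k + 1 = N + k + 1 + 1 by omega, partialBinomialSum_succ_right,
        show N + k + 1 = N + 1 + k by omega, pow_succ, pow_mul,
        show (-4 : ℤ) = -1 * 4 by norm_num, mul_pow]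
      ring
    rw [sum_congr rfl hstep, sum_add_distrib, sum_neg_distrib, ← mul_sum, sum_range_succ, ih,
      show N + (N + 1) + 1 = 2 * (N + 1) by omega, partialBinomialSum_self,
      ← evenDiagonalChooseSum, (diagonalChooseSums_neg_four (N + 1)).1]
    norm_num [pow_mul]
    ring

theorem sum_sum_neg_one_pow_choose_mul_two_pow (N : ℕ) :
    ∑ k ∈ range (N + 1), ∑ m ∈ Icc (2 * k + 1) (N + k + 1),
        (-1 : ℤ) ^ (m + k + 1) * (N + k + 1).choose m * 2 ^ (m - 1) =
      (-1) ^ N * (N + 1) ^ 2 := by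
  have h : 2 * ∑ k ∈ range (N + 1), ∑ m ∈ Icc (2 * k + 1) (N + k + 1),
      (-1 : ℤ) ^ (m + k + 1) * (N + k + 1).choose m * 2 ^ (m - 1) =
        2 * ((-1) ^ N * (N + 1) ^ 2) := by
    rw [mul_sum, sum_congr rfl fun k hk =>
        two_mul_sum_Icc_neg_one_pow_choose_mul_two_pow (by grind),
      sum_add_distrib, sum_neg_one_pow_mul_partialBinomialSum, sum_const, card_range, nsmul_eq_mul]
    push_cast
    ring
  exact mul_left_cancel₀ two_ne_zero h

theorem cor4_general (n : ℕ) :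
    ∑ k ∈ Finset.range (2 * n + 1), ∑ m ∈ Finset.Icc (2 * k + 1) (2 * n + k + 1),
      (-1 : ℤ) ^ (m + k + 1) * ((2 * n + k + 1).choose m) * 2 ^ (m - 1)
      = (2 * n + 1) ^ 2 := by
  simpa [pow_mul] using sum_sum_neg_one_pow_choose_mul_two_pow (2 * n)

theorem cor4 (n : ℕ) (hn : 1 ≤ n) :
    ∑ k ∈ Finset.range (2 * n + 1), ∑ m ∈ Finset.Icc (2 * k + 1) (2 * n + k + 1),
      (-1 : ℤ) ^ (m + k + 1) * ((2 * n + k + 1).choose m) * 2 ^ (m - 1)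
      = (2 * n + 1) ^ 2 :=
  cor4_general n
end

section
/- For every nonnegative integer n, ∑_{m=0}^{n+1} (-1)^{m+n+1} * C(n+m+1, 2m) * 2^{2m-1} = n + 3/2. -/
/-!
Up to the factor `(-1) ^ (n + 1) / 2`, the sum is the Morgan–Voyce polynomial
`b_{n+1}(x) = ∑ₘ C(n+1+m, 2m) xᵐ` evaluated at `x = -4`. Pascal's rule couples `b_n` with its
companion `B_n(x) = ∑ₘ C(n+m+1, 2m+1) xᵐ` through `b_{n+1} = b_n + x B_n` and
`B_{n+1} = B_n + b_{n+1}`, and at `x = -4` this first-order system is solved by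
`b_n = (-1)ⁿ (2n+1)`, `B_n = (-1)ⁿ (n+1)`.
-/

open Finset

namespace MorganVoyce

variable {R : Type*}

section CommSemiring

variable [CommSemiring R]

def b (n : ℕ) (x : R) : R :=
  ∑ m ∈ range (n + 1), ((n + m).choose (2 * m) : R) * x ^ m

def B (n : ℕ) (x : R) : R :=
  ∑ m ∈ range (n + 1), ((n + m + 1).choose (2 * m + 1) : R) * x ^ m

theorem b_eq_sum_range_add_two (n : ℕ) (x : R) :
    b n x = ∑ m ∈ range (n + 2), ((n + m).choose (2 * m) : R) * x ^ m := by
  rw [sum_range_succ, Nat.choose_eq_zero_of_lt (by omega), Nat.cast_zero, zero_mul, add_zero, b]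

theorem B_eq_sum_range_add_two (n : ℕ) (x : R) :
    B n x = ∑ m ∈ range (n + 2), ((n + m + 1).choose (2 * m + 1) : R) * x ^ m := by
  rw [sum_range_succ, Nat.choose_eq_zero_of_lt (by omega), Nat.cast_zero, zero_mul, add_zero, B]

theorem b_succ (n : ℕ) (x : R) : b (n + 1) x = b n x + x * B n x := by
  have pascal : ∀ m, ((n + 1 + (m + 1)).choose (2 * (m + 1)) : R)
      = (n + m + 1).choose (2 * m + 1) + (n + (m + 1)).choose (2 * (m + 1)) := by
    intro m
    rw [show n + 1 + (m + 1) = n + m + 1 + 1 by omega, show 2 * (m + 1) = 2 * m + 1 + 1 by omega,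
      Nat.choose_succ_succ', Nat.cast_add, show n + (m + 1) = n + m + 1 by omega]
  rw [b, sum_range_succ', b_eq_sum_range_add_two, sum_range_succ' _ (n + 1), B, mul_sum]
  simp only [add_zero, Nat.mul_zero, Nat.choose_zero_right]
  rw [add_right_comm, ← sum_add_distrib]
  congr 1
  refine sum_congr rfl fun m _ => ?_
  rw [pascal, pow_succ]
  ring

theorem B_succ (n : ℕ) (x : R) : B (n + 1) x = B n x + b (n + 1) x := by
  have pascal : ∀ m, ((n + 1 + m + 1).choose (2 * m + 1) : R)
      = (n + 1 + m).choose (2 * m) + (n + m + 1).choose (2 * m + 1) := by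
    intro m
    rw [Nat.choose_succ_succ', Nat.cast_add, show n + 1 + m = n + m + 1 by omega]
  rw [B, B_eq_sum_range_add_two, b]
  simp only [pascal, add_mul, sum_add_distrib]
  ring

end CommSemiring

theorem b_neg_four_and_B_neg_four [CommRing R] (n : ℕ) :
    b n (-4 : R) = (-1) ^ n * (2 * n + 1) ∧ B n (-4 : R) = (-1) ^ n * (n + 1) := by
  induction n with
  | zero => simp [b, B]
  | succ n ih =>
    have hb : b (n + 1) (-4 : R) = (-1) ^ (n + 1) * (2 * (n + 1 : ℕ) + 1) := by
      rw [b_succ, ih.1, ih.2]; push_cast; ring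
    refine ⟨hb, ?_⟩
    rw [B_succ, hb, ih.2]; push_cast; ring

end MorganVoyce

theorem thm2_half (n : ℕ) :
    ∑ m ∈ Finset.range (n + 2),
      (-1 : ℚ) ^ (m + n + 1) * ((n + m + 1).choose (2 * m)) * (2 : ℚ) ^ (2 * (m : ℤ) - 1)
      = (n : ℚ) + 3 / 2 := by
  have term : ∀ m : ℕ, (-1 : ℚ) ^ (m + n + 1) * ((n + m + 1).choose (2 * m)) *
      (2 : ℚ) ^ (2 * (m : ℤ) - 1)
      = (-1) ^ (n + 1) / 2 * (((n + 1 + m).choose (2 * m) : ℚ) * (-4) ^ m) := by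
    intro m
    rw [zpow_sub₀ two_ne_zero, zpow_one, zpow_mul, zpow_natCast,
      show n + m + 1 = n + 1 + m by omega, neg_pow (4 : ℚ), pow_add, pow_add]
    norm_num
    ring
  rw [sum_congr rfl fun m _ => term m, ← mul_sum, ← MorganVoyce.b,
    (MorganVoyce.b_neg_four_and_B_neg_four _).1, ← mul_assoc, div_mul_eq_mul_div, ← pow_add,
    ← two_mul, pow_mul]
  push_cast
  ring
end
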